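/- Let d ≥ 1 be an integer and let s : [0,∞) → ℝ be twice differentiable. Then for every x ∈ ℝ^d with x ≠ 0, the Laplacian of the function g(x) = s(‖x‖²)/‖x‖² satisfies Δg(x) = (2/‖x‖⁴) [ 2‖x‖⁴ s''(‖x‖²) + (d−4) ( ‖x‖² s'(‖x‖²) − s(‖x‖²) ) ]. -/

import Mathlib

open Set Filter Topology
open scoped RealInnerProductSpace

/-! The Hessian of a radial function `f (‖x‖²)` is `4 f''(‖x‖²) x ⊗ x + 2 f'(‖x‖²) I`, so its
trace in any orthonormal basis is `4 ‖x‖² f''(‖x‖²) + 2 d f'(‖x‖²)`. Applying this to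
`f u = s u / u`, which is twice differentiable near `‖x‖² > 0` (where the one-sided derivatives
of `s` on `[0, ∞)` are genuine derivatives), and simplifying gives the formula. -/

theorem DifferentiableOn.hasDerivAt_derivWithin_Ici {g : ℝ → ℝ} {a u : ℝ}
    (hg : DifferentiableOn ℝ g (Ici a)) (hu : a < u) :
    HasDerivAt g (derivWithin g (Ici a) u) u := by
  rw [derivWithin_of_mem_nhds (Ici_mem_nhds hu)]
  exact (hg.differentiableAt (Ici_mem_nhds hu)).hasDerivAt

section Radial

variable {E : Type*} [NormedAddCommGroup E] [InnerProductSpace ℝ E]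
  {f f' : ℝ → ℝ} {f'' : ℝ} {x : E}

theorem fderiv_comp_norm_sq_apply {a : ℝ} (hf : HasDerivAt f a (‖x‖ ^ 2)) (v : E) :
    fderiv ℝ (fun z => f (‖z‖ ^ 2)) x v = 2 * a * ⟪v, x⟫ := by
  have hderiv : HasFDerivAt (fun z => f (‖z‖ ^ 2)) _ x :=
    hf.comp_hasFDerivAt x (hasStrictFDerivAt_norm_sq x).hasFDerivAt
  rw [hderiv.fderiv]
  simp only [smul_apply, innerSL_apply_apply, smul_eq_mul, nsmul_eq_mul, real_inner_comm x v]
  push_cast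
  ring

theorem fderiv_fderiv_comp_norm_sq_apply
    (hf : ∀ᶠ u in 𝓝 (‖x‖ ^ 2), HasDerivAt f (f' u) u) (hf' : HasDerivAt f' f'' (‖x‖ ^ 2))
    (v : E) :
    fderiv ℝ (fun y => fderiv ℝ (fun z => f (‖z‖ ^ 2)) y v) x v
      = 4 * f'' * ⟪v, x⟫ ^ 2 + 2 * f' (‖x‖ ^ 2) * ‖v‖ ^ 2 := by
  have hnear : (fun y => fderiv ℝ (fun z => f (‖z‖ ^ 2)) y v)
      =ᶠ[𝓝 x] fun y => 2 * f' (‖y‖ ^ 2) * ⟪v, y⟫ :=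
    ((continuous_norm.pow 2).continuousAt.eventually hf).mono fun y hy =>
      fderiv_comp_norm_sq_apply hy v
  have hderiv : HasFDerivAt (fun y => 2 * f' (‖y‖ ^ 2) * ⟪v, y⟫) _ x :=
    ((hf'.comp_hasFDerivAt x (hasStrictFDerivAt_norm_sq x).hasFDerivAt).const_mul 2).fun_mul
      ((innerSL ℝ v).hasFDerivAt (x := x))
  rw [hnear.fderiv_eq, hderiv.fderiv]
  simp only [add_apply, smul_apply, innerSL_apply_apply, smul_eq_mul, nsmul_eq_mul,
    real_inner_comm x v, real_inner_self_eq_norm_sq, Function.comp_apply]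
  push_cast
  ring

theorem OrthonormalBasis.sum_fderiv_fderiv_comp_norm_sq {ι : Type*} [Fintype ι]
    (b : OrthonormalBasis ι ℝ E)
    (hf : ∀ᶠ u in 𝓝 (‖x‖ ^ 2), HasDerivAt f (f' u) u) (hf' : HasDerivAt f' f'' (‖x‖ ^ 2)) :
    ∑ i, fderiv ℝ (fun y => fderiv ℝ (fun z => f (‖z‖ ^ 2)) y (b i)) x (b i)
      = 4 * f'' * ‖x‖ ^ 2 + 2 * Fintype.card ι * f' (‖x‖ ^ 2) := by
  simp only [fderiv_fderiv_comp_norm_sq_apply hf hf', b.orthonormal.1, Finset.sum_add_distrib,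
    ← Finset.mul_sum, b.sum_sq_inner_right, Finset.sum_const, Finset.card_univ, nsmul_eq_mul]
  ring

end Radial

theorem HasDerivAt.div_id {s : ℝ → ℝ} {s' u : ℝ} (hs : HasDerivAt s s' u) (hu : u ≠ 0) :
    HasDerivAt (fun u => s u / u) ((u * s' - s u) / u ^ 2) u := by
  refine (hs.fun_div (hasDerivAt_id' u) hu).congr_deriv ?_
  ring

theorem hasDerivAt_deriv_div_id {s s' : ℝ → ℝ} {s'' r : ℝ}
    (hs : HasDerivAt s (s' r) r) (hs' : HasDerivAt s' s'' r) (hr : r ≠ 0) :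
    HasDerivAt (fun u => (u * s' u - s u) / u ^ 2) (s'' / r - 2 * (r * s' r - s r) / r ^ 3) r := by
  have hnum := ((hasDerivAt_id' r).fun_mul hs').fun_sub hs
  refine (hnum.fun_div (hasDerivAt_pow 2 r) (pow_ne_zero 2 hr)).congr_deriv ?_
  field_simp
  ring

theorem stmt6_general (d : ℕ)
    (s : ℝ → ℝ)
    (hs_diff : DifferentiableOn ℝ s (Ici 0))
    (hs'_diff : DifferentiableOn ℝ (derivWithin s (Ici 0)) (Ici 0)) :
    ∀ x : EuclideanSpace ℝ (Fin d), x ≠ 0 →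
      (∑ k : Fin d,
        fderiv ℝ (fun y : EuclideanSpace ℝ (Fin d) =>
            fderiv ℝ (fun z : EuclideanSpace ℝ (Fin d) => s (‖z‖ ^ 2) / ‖z‖ ^ 2) y
              (EuclideanSpace.single k (1 : ℝ))) x
          (EuclideanSpace.single k (1 : ℝ)))
      = 2 / ‖x‖ ^ 4 *
          (2 * ‖x‖ ^ 4 * derivWithin (derivWithin s (Ici 0)) (Ici 0) (‖x‖ ^ 2)
            + ((d : ℝ) - 4) * (‖x‖ ^ 2 * derivWithin s (Ici 0) (‖x‖ ^ 2) - s (‖x‖ ^ 2))) := by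
  intro x hx
  set r := ‖x‖ ^ 2 with hr_def
  have hr : 0 < r := by positivity
  have hq : ∀ᶠ u in 𝓝 r, HasDerivAt (fun u => s u / u)
      ((u * derivWithin s (Ici 0) u - s u) / u ^ 2) u :=
    (eventually_gt_nhds hr).mono fun u hu => (hs_diff.hasDerivAt_derivWithin_Ici hu).div_id hu.ne'
  have hq' := hasDerivAt_deriv_div_id (hs_diff.hasDerivAt_derivWithin_Ici hr)
    (hs'_diff.hasDerivAt_derivWithin_Ici hr) hr.ne'
  have hlap := (EuclideanSpace.basisFun (Fin d) ℝ).sum_fderiv_fderiv_comp_norm_sq hq hq'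
  simp only [EuclideanSpace.basisFun_apply, Fintype.card_fin, ← hr_def] at hlap
  rw [hlap, show ‖x‖ ^ 4 = r ^ 2 by ring]
  field_simp
  ring

/-- Explicit Laplacian of `g(x) = s(‖x‖²)/‖x‖²` for twice differentiable
`s : [0,∞) → ℝ` and `x ≠ 0`:
`Δg(x) = (2/‖x‖⁴)[2‖x‖⁴ s''(‖x‖²) + (d-4)(‖x‖² s'(‖x‖²) - s(‖x‖²))]`. -/
theorem stmt6 (d : ℕ) (hd : 1 ≤ d)
    (s : ℝ → ℝ)
    (hs_diff : DifferentiableOn ℝ s (Ici 0))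
    (hs'_diff : DifferentiableOn ℝ (derivWithin s (Ici 0)) (Ici 0)) :
    ∀ x : EuclideanSpace ℝ (Fin d), x ≠ 0 →
      (∑ k : Fin d,
        fderiv ℝ (fun y : EuclideanSpace ℝ (Fin d) =>
            fderiv ℝ (fun z : EuclideanSpace ℝ (Fin d) => s (‖z‖ ^ 2) / ‖z‖ ^ 2) y
              (EuclideanSpace.single k (1 : ℝ))) x
          (EuclideanSpace.single k (1 : ℝ)))
      = 2 / ‖x‖ ^ 4 *
          (2 * ‖x‖ ^ 4 * derivWithin (derivWithin s (Ici 0)) (Ici 0) (‖x‖ ^ 2)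
            + ((d : ℝ) - 4) * (‖x‖ ^ 2 * derivWithin s (Ici 0) (‖x‖ ^ 2) - s (‖x‖ ^ 2))) :=
  stmt6_general d s hs_diff hs'_diff
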